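/- arXiv:1409.3485 — 2 statements merged into one kernel-verified Lean document; each statement's English description precedes it below -/
import Mathlib

section
/- Let T > 0, ν₀ > 0, K₂, K₃, K₄ > 0 and 0 < ν̄ < ν₀, and set μ := ν₀ − ν̄. Let X : [0,T] → ℝ be continuous, nonnegative and differentiable on (0,T), and let Y, U, H : [0,T] → ℝ be nonnegative and Lebesgue integrable. Assume the differential inequality X'(t) + (ν₀ − K₂·√(X(t)))·Y(t) ≤ K₃·X(t)·U(t) + K₄·H(t) for every t ∈ (0,T), and the smallness condition (X(0) + K₄·∫₀ᵀ H(t) dt)·exp(K₃·∫₀ᵀ U(t) dt) < (ν̄/K₂)². Then for every t ∈ [0,T], X(t) + μ·∫₀ᵗ Y(s) ds ≤ (X(0) + K₄·∫₀ᵀ H(t) dt)·exp(K₃·∫₀ᵀ U(t) dt) < (ν̄/K₂)²; in particular X(t) < (ν̄/K₂)² for all t ∈ [0,T]. -/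
open MeasureTheory

lemma gronwall_cont (k φ : ℝ → ℝ) (hk : Continuous k) (hknn : ∀ s, 0 ≤ k s)
    (hφ : Continuous φ) (τ A : ℝ)
    (h : ∀ t ∈ Set.Icc (0:ℝ) τ, φ t ≤ A + ∫ s in (0:ℝ)..t, k s * φ s) :
    ∀ t ∈ Set.Icc (0:ℝ) τ, φ t ≤ A * Real.exp (∫ s in (0:ℝ)..t, k s) := by
  set ψ : ℝ → ℝ := fun t => A + ∫ s in (0:ℝ)..t, k s * φ s with hψ
  set κ : ℝ → ℝ := fun t => ∫ s in (0:ℝ)..t, k s with hκ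
  have hψd : ∀ t : ℝ, HasDerivAt ψ (k t * φ t) t := fun t =>
    (((hk.mul hφ).integral_hasStrictDerivAt 0 t).hasDerivAt).const_add A
  have hκd : ∀ t : ℝ, HasDerivAt κ (k t) t := fun t =>
    ((hk.integral_hasStrictDerivAt 0 t).hasDerivAt)
  set G : ℝ → ℝ := fun t => ψ t * Real.exp (-κ t) with hG
  have hGd : ∀ t : ℝ, HasDerivAt G
      (k t * φ t * Real.exp (-κ t) + ψ t * (Real.exp (-κ t) * -(k t))) t := by
    intro t
    exact (hψd t).mul (((hκd t).neg).exp)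
  have hanti : AntitoneOn G (Set.Icc 0 τ) := by
    apply antitoneOn_of_deriv_nonpos (convex_Icc 0 τ)
    · exact fun t _ => ((hGd t).differentiableAt).continuousAt.continuousWithinAt
    · exact fun t _ => ((hGd t).differentiableAt).differentiableWithinAt
    · intro t ht
      rw [interior_Icc] at ht
      rw [(hGd t).deriv]
      have h1 := h t (Set.mem_Icc.2 ⟨ht.1.le, ht.2.le⟩)
      have h2 : φ t ≤ ψ t := h1
      nlinarith [mul_nonneg (mul_nonneg (hknn t) (sub_nonneg.2 h2)) (Real.exp_pos (-κ t)).le]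
  intro t ht
  have hG0 : G 0 = A := by
    simp [hG, hψ, hκ, intervalIntegral.integral_same]
  have hGt : G t ≤ A := by
    rw [← hG0]
    exact hanti (Set.mem_Icc.2 ⟨le_refl 0, ht.1.trans ht.2⟩) ht ht.1
  have hψt : ψ t ≤ A * Real.exp (κ t) := by
    have := mul_le_mul_of_nonneg_right hGt (Real.exp_pos (κ t)).le
    calc ψ t = ψ t * Real.exp (-κ t) * Real.exp (κ t) := by
            rw [mul_assoc, ← Real.exp_add]; simp
      _ ≤ A * Real.exp (κ t) := this
  exact (h t ht).trans hψt

set_option maxHeartbeats 1000000 in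
lemma gronwall_int (k φ : ℝ → ℝ) (hk : MeasureTheory.Integrable k) (hknn : ∀ s, 0 ≤ k s)
    (hφ : Continuous φ) (τ A : ℝ) (hA : 0 ≤ A)
    (h : ∀ t ∈ Set.Icc (0:ℝ) τ, φ t ≤ A + ∫ s in (0:ℝ)..t, k s * φ s) :
    ∀ t ∈ Set.Icc (0:ℝ) τ, φ t ≤ A * Real.exp (∫ s in (0:ℝ)..t, k s) := by
  intro t ht
  obtain ⟨C, hC⟩ := (isCompact_Icc (a := (0:ℝ)) (b := τ)).exists_bound_of_continuousOn
    hφ.continuousOn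
  set M : ℝ := max C 0 with hMdef
  have hM0 : 0 ≤ M := le_max_right _ _
  have hφM : ∀ u ∈ Set.Icc (0:ℝ) τ, |φ u| ≤ M := fun u hu => (hC u hu).trans (le_max_left _ _)
  have key : ∀ ε : ℝ, 0 < ε → φ t ≤ (A + M * ε) * Real.exp ((∫ s in (0:ℝ)..t, k s) + ε) := by
    intro ε hε
    obtain ⟨g, hgsupp, hg1, hgc, hgint⟩ := hk.exists_hasCompactSupport_integral_sub_le hε
    set k' : ℝ → ℝ := fun s => |g s| with hk'def
    have hk'c : Continuous k' := hgc.abs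
    have hk'nn : ∀ s, 0 ≤ k' s := fun s => abs_nonneg _
    have hdiff : ∀ s, |k s - k' s| ≤ |k s - g s| := by
      intro s
      have h1 : |k s| = k s := abs_of_nonneg (hknn s)
      calc |k s - k' s| = abs (|k s| - |g s|) := by rw [h1]
        _ ≤ |k s - g s| := abs_abs_sub_abs_le_abs_sub _ _
    have hintkg : MeasureTheory.Integrable (fun s => |k s - g s|) := (hk.sub hgint).abs
    have hintk' : MeasureTheory.Integrable k' :=
      hgc.abs.integrable_of_hasCompactSupport hgsupp.abs
    have hintkk' : MeasureTheory.Integrable (fun s => |k s - k' s|) := (hk.sub hintk').abs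
    have herr : ∀ u : ℝ, 0 ≤ u → (∫ s in (0:ℝ)..u, |k s - k' s|) ≤ ε := by
      intro u hu
      have h1 : (∫ s in (0:ℝ)..u, |k s - k' s|) ≤ ∫ s in (0:ℝ)..u, |k s - g s| :=
        intervalIntegral.integral_mono_on hu hintkk'.intervalIntegrable
          hintkg.intervalIntegrable (fun s _ => hdiff s)
      have h2 : (∫ s in (0:ℝ)..u, |k s - g s|) ≤ ∫ s, |k s - g s| := by
        rw [intervalIntegral.integral_of_le hu]
        exact setIntegral_le_integral hintkg (Filter.Eventually.of_forall fun s => abs_nonneg _)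
      have h3 : (∫ s, |k s - g s|) ≤ ε := by
        simpa [Real.norm_eq_abs] using hg1
      linarith
    -- integrability of products on subintervals of [0, τ]
    have hkφ : ∀ u : ℝ, IntervalIntegrable (fun s => k s * φ s) volume 0 u := fun u =>
      hk.intervalIntegrable.mul_continuousOn hφ.continuousOn
    have hk'φ : ∀ u : ℝ, IntervalIntegrable (fun s => k' s * φ s) volume 0 u := fun u =>
      (hk'c.mul hφ).intervalIntegrable _ _
    have hstep : ∀ u ∈ Set.Icc (0:ℝ) τ, φ u ≤ (A + M * ε) + ∫ s in (0:ℝ)..u, k' s * φ s := by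
      intro u hu
      have h0 := h u hu
      have hsplit : (∫ s in (0:ℝ)..u, (k s - k' s) * φ s)
          = (∫ s in (0:ℝ)..u, k s * φ s) - ∫ s in (0:ℝ)..u, k' s * φ s := by
        simp only [sub_mul]
        exact intervalIntegral.integral_sub (hkφ u) (hk'φ u)
      have hb : (∫ s in (0:ℝ)..u, (k s - k' s) * φ s) ≤ M * ε := by
        have hmono : (∫ s in (0:ℝ)..u, (k s - k' s) * φ s)
            ≤ ∫ s in (0:ℝ)..u, |k s - k' s| * M := by
          have hii : IntervalIntegrable (fun s => (k s - k' s) * φ s) volume 0 u := by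
            have := (hkφ u).sub (hk'φ u)
            simpa [sub_mul] using this
          refine intervalIntegral.integral_mono_on hu.1 hii
            (hintkk'.intervalIntegrable.mul_const M) (fun s hs => ?_)
          have hφs : |φ s| ≤ M := hφM s ⟨hs.1, hs.2.trans hu.2⟩
          calc (k s - k' s) * φ s ≤ |(k s - k' s) * φ s| := le_abs_self _
            _ = |k s - k' s| * |φ s| := abs_mul _ _
            _ ≤ |k s - k' s| * M := by
                exact mul_le_mul_of_nonneg_left hφs (abs_nonneg _)
        have : (∫ s in (0:ℝ)..u, |k s - k' s| * M) = (∫ s in (0:ℝ)..u, |k s - k' s|) * M :=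
          intervalIntegral.integral_mul_const _ _
        rw [this] at hmono
        calc (∫ s in (0:ℝ)..u, (k s - k' s) * φ s) ≤ (∫ s in (0:ℝ)..u, |k s - k' s|) * M :=
              hmono
          _ ≤ ε * M := mul_le_mul_of_nonneg_right (herr u hu.1) hM0
          _ = M * ε := mul_comm _ _
      linarith [h0, hb, hsplit]
    have hgron := gronwall_cont k' φ hk'c hk'nn hφ τ (A + M * ε)
      hstep t ht
    have hκle : (∫ s in (0:ℝ)..t, k' s) ≤ (∫ s in (0:ℝ)..t, k s) + ε := by
      have h1 : (∫ s in (0:ℝ)..t, k' s - k s) ≤ ∫ s in (0:ℝ)..t, |k s - k' s| := by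
        refine intervalIntegral.integral_mono_on ht.1
          ((hk'c.intervalIntegrable _ _).sub hk.intervalIntegrable)
          hintkk'.intervalIntegrable (fun s _ => ?_)
        rw [abs_sub_comm]
        exact le_abs_self _
      have h2 : (∫ s in (0:ℝ)..t, (k' s - k s))
          = (∫ s in (0:ℝ)..t, k' s) - ∫ s in (0:ℝ)..t, k s :=
        intervalIntegral.integral_sub (hk'c.intervalIntegrable 0 t) hk.intervalIntegrable
      rw [h2] at h1
      linarith [herr t ht.1]
    calc φ t ≤ (A + M * ε) * Real.exp (∫ s in (0:ℝ)..t, k' s) := hgron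
      _ ≤ (A + M * ε) * Real.exp ((∫ s in (0:ℝ)..t, k s) + ε) := by
          refine mul_le_mul_of_nonneg_left (Real.exp_le_exp.2 hκle) ?_
          positivity
  -- pass to the limit ε → 0⁺
  have htend : Filter.Tendsto (fun ε : ℝ => (A + M * ε) * Real.exp ((∫ s in (0:ℝ)..t, k s) + ε))
      (nhdsWithin 0 (Set.Ioi 0)) (nhds (A * Real.exp (∫ s in (0:ℝ)..t, k s))) := by
    have hcont : Continuous fun ε : ℝ => (A + M * ε) * Real.exp ((∫ s in (0:ℝ)..t, k s) + ε) := by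
      continuity
    have := hcont.tendsto 0
    simp only [mul_zero, add_zero] at this
    exact this.mono_left nhdsWithin_le_nhds
  refine ge_of_tendsto htend ?_
  filter_upwards [self_mem_nhdsWithin] with ε hε
  exact key ε hε

/-- ODI core of Theorem 1 (robustness of regularity): a Grönwall-type blowup
argument for `X' + (ν₀ - K₂ √X) Y ≤ K₃ X U + K₄ H` under the smallness
condition on the data. -/
theorem stmt0 (T ν₀ K₂ K₃ K₄ νb : ℝ)
    (hT : 0 < T) (hν₀ : 0 < ν₀) (hK₂ : 0 < K₂) (hK₃ : 0 < K₃) (hK₄ : 0 < K₄)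
    (hνb : 0 < νb) (hνbν : νb < ν₀)
    (μ : ℝ) (hμ : μ = ν₀ - νb)
    (X X' Y U H : ℝ → ℝ)
    (hXcont : ContinuousOn X (Set.Icc 0 T))
    (hXnn : ∀ t ∈ Set.Icc (0:ℝ) T, 0 ≤ X t)
    (hXderiv : ∀ t ∈ Set.Ioo (0:ℝ) T, HasDerivAt X (X' t) t)
    (hYnn : ∀ t ∈ Set.Icc (0:ℝ) T, 0 ≤ Y t)
    (hUnn : ∀ t ∈ Set.Icc (0:ℝ) T, 0 ≤ U t)
    (hHnn : ∀ t ∈ Set.Icc (0:ℝ) T, 0 ≤ H t)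
    (hYint : IntervalIntegrable Y volume 0 T)
    (hUint : IntervalIntegrable U volume 0 T)
    (hHint : IntervalIntegrable H volume 0 T)
    (hODI : ∀ t ∈ Set.Ioo (0:ℝ) T,
      X' t + (ν₀ - K₂ * Real.sqrt (X t)) * Y t ≤ K₃ * X t * U t + K₄ * H t)
    (hsmall : (X 0 + K₄ * ∫ t in (0:ℝ)..T, H t) * Real.exp (K₃ * ∫ t in (0:ℝ)..T, U t)
      < (νb / K₂) ^ 2) :
    ∀ t ∈ Set.Icc (0:ℝ) T,
      X t + μ * ∫ s in (0:ℝ)..t, Y s ≤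
        (X 0 + K₄ * ∫ t in (0:ℝ)..T, H t) * Real.exp (K₃ * ∫ t in (0:ℝ)..T, U t) ∧
      X t < (νb / K₂) ^ 2 := by
  have hμpos : 0 < μ := by rw [hμ]; linarith
  set r : ℝ := (νb / K₂) ^ 2 with hrdef
  have hIHnn : 0 ≤ ∫ t in (0:ℝ)..T, H t :=
    intervalIntegral.integral_nonneg hT.le (fun u hu => hHnn u hu)
  have hIUnn : 0 ≤ ∫ t in (0:ℝ)..T, U t :=
    intervalIntegral.integral_nonneg hT.le (fun u hu => hUnn u hu)
  set A : ℝ := X 0 + K₄ * ∫ t in (0:ℝ)..T, H t with hAdef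
  set E : ℝ := A * Real.exp (K₃ * ∫ t in (0:ℝ)..T, U t) with hEdef
  have hX0 : 0 ≤ X 0 := hXnn 0 ⟨le_refl 0, hT.le⟩
  have hAnn : 0 ≤ A := add_nonneg hX0 (mul_nonneg hK₄.le hIHnn)
  have hX0A : X 0 ≤ A := le_add_of_nonneg_right (mul_nonneg hK₄.le hIHnn)
  have hAE : A ≤ E := by
    calc A = A * 1 := (mul_one A).symm
      _ ≤ E := mul_le_mul_of_nonneg_left
          (Real.one_le_exp (mul_nonneg hK₃.le hIUnn)) hAnn
  have hErlt : E < r := hsmall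
  -- the (integrable, nonnegative) kernel for the Gronwall argument
  set k : ℝ → ℝ := (Set.Icc (0:ℝ) T).indicator (fun s => K₃ * U s) with hkdef
  have hUIcc : MeasureTheory.IntegrableOn (fun s => K₃ * U s) (Set.Icc 0 T) :=
    ((intervalIntegrable_iff_integrableOn_Icc_of_le hT.le).1 hUint).const_mul K₃
  have hkint : MeasureTheory.Integrable k := hUIcc.integrable_indicator measurableSet_Icc
  have hknn : ∀ s, 0 ≤ k s :=
    fun s => Set.indicator_nonneg (fun u hu => mul_nonneg hK₃.le (hUnn u hu)) s
  have hkeq : ∀ s ∈ Set.Icc (0:ℝ) T, k s = K₃ * U s := fun s hs => Set.indicator_of_mem hs _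
  have hkI : ∀ u ∈ Set.Icc (0:ℝ) T,
      (∫ s in (0:ℝ)..u, k s) = K₃ * ∫ s in (0:ℝ)..u, U s := by
    intro u hu
    rw [← intervalIntegral.integral_const_mul]
    apply intervalIntegral.integral_congr
    intro s hs
    rw [Set.uIcc_of_le hu.1] at hs
    exact hkeq s ⟨hs.1, hs.2.trans hu.2⟩
  have hkTE : A * Real.exp (∫ s in (0:ℝ)..T, k s) = E := by
    rw [hkI T ⟨hT.le, le_refl T⟩]
  -- the Y-primitive and the function W
  have hYIcc : MeasureTheory.IntegrableOn Y (Set.Icc 0 T) :=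
    (intervalIntegrable_iff_integrableOn_Icc_of_le hT.le).1 hYint
  have hIYcont : ContinuousOn (fun u => ∫ s in (0:ℝ)..u, Y s) (Set.Icc 0 T) := by
    have h1 : MeasureTheory.IntegrableOn Y (Set.uIcc 0 T) := by
      rw [Set.uIcc_of_le hT.le]; exact hYIcc
    have := intervalIntegral.continuousOn_primitive_interval h1
    rwa [Set.uIcc_of_le hT.le] at this
  have hIYnn : ∀ u ∈ Set.Icc (0:ℝ) T, 0 ≤ ∫ s in (0:ℝ)..u, Y s := fun u hu =>
    intervalIntegral.integral_nonneg hu.1 (fun s hs => hYnn s ⟨hs.1, hs.2.trans hu.2⟩)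
  set W : ℝ → ℝ := fun u => X u + μ * ∫ s in (0:ℝ)..u, Y s with hWdef
  have hWcont : ContinuousOn W (Set.Icc 0 T) := hXcont.add (continuousOn_const.mul hIYcont)
  have hXW : ∀ u ∈ Set.Icc (0:ℝ) T, X u ≤ W u := fun u hu =>
    le_add_of_nonneg_right (mul_nonneg hμpos.le (hIYnn u hu))
  -- interval integrability of the pieces of the differential inequality
  have hsqX : ContinuousOn (fun u => Real.sqrt (X u)) (Set.Icc 0 T) :=
    Real.continuous_sqrt.comp_continuousOn hXcont
  set φf : ℝ → ℝ :=
    fun u => K₃ * X u * U u + K₄ * H u - (ν₀ - K₂ * Real.sqrt (X u)) * Y u with hφfdef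
  have hUXint : IntervalIntegrable (fun u => K₃ * X u * U u) volume 0 T :=
    hUint.continuousOn_mul (by rw [Set.uIcc_of_le hT.le]; exact continuousOn_const.mul hXcont)
  have hHKint : IntervalIntegrable (fun u => K₄ * H u) volume 0 T := hHint.const_mul K₄
  have hYfacint : IntervalIntegrable
      (fun u => (ν₀ - K₂ * Real.sqrt (X u)) * Y u) volume 0 T :=
    hYint.continuousOn_mul (by
      rw [Set.uIcc_of_le hT.le]
      exact continuousOn_const.sub (continuousOn_const.mul hsqX))
  have hφfint : IntervalIntegrable φf volume 0 T := (hUXint.add hHKint).sub hYfacint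
  -- key step: on any interval where X ≤ r, the Gronwall bound for W holds
  have key : ∀ t ∈ Set.Icc (0:ℝ) T, (∀ s ∈ Set.Icc (0:ℝ) t, X s ≤ r) →
      ∀ s ∈ Set.Icc (0:ℝ) t, W s ≤ E := by
    intro t ht hbd
    have hW : ∀ s ∈ Set.Icc (0:ℝ) t, W s ≤ A + ∫ u in (0:ℝ)..s, k u * W u := by
      intro s hs
      have hsT : s ∈ Set.Icc (0:ℝ) T := ⟨hs.1, hs.2.trans ht.2⟩
      have hsubu : Set.uIcc (0:ℝ) s ⊆ Set.uIcc (0:ℝ) T := by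
        rw [Set.uIcc_of_le hs.1, Set.uIcc_of_le hT.le]
        exact Set.Icc_subset_Icc le_rfl hsT.2
      have hUXs := hUXint.mono_set hsubu
      have hHKs := hHKint.mono_set hsubu
      have hYfacs := hYfacint.mono_set hsubu
      -- FTC comparison
      have hftc : X s - X 0 ≤ ∫ u in (0:ℝ)..s, φf u := by
        apply intervalIntegral.sub_le_integral_of_hasDeriv_right_of_le hs.1
          (hXcont.mono (Set.Icc_subset_Icc le_rfl hsT.2))
          (fun x hx =>
            (hXderiv x ⟨hx.1, lt_of_lt_of_le hx.2 hsT.2⟩).hasDerivWithinAt)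
          ((intervalIntegrable_iff_integrableOn_Icc_of_le hs.1).1 (hφfint.mono_set hsubu))
        intro x hx
        have h0 := hODI x ⟨hx.1, lt_of_lt_of_le hx.2 hsT.2⟩
        simp only [hφfdef]
        linarith
      have hsplit : (∫ u in (0:ℝ)..s, φf u)
          = (∫ u in (0:ℝ)..s, K₃ * X u * U u) + (∫ u in (0:ℝ)..s, K₄ * H u)
            - ∫ u in (0:ℝ)..s, (ν₀ - K₂ * Real.sqrt (X u)) * Y u := by
        rw [← intervalIntegral.integral_add hUXs hHKs,
          ← intervalIntegral.integral_sub (hUXs.add hHKs) hYfacs]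
      have hb1 : (∫ u in (0:ℝ)..s, K₃ * X u * U u) = ∫ u in (0:ℝ)..s, k u * X u := by
        apply intervalIntegral.integral_congr
        intro u hu
        rw [Set.uIcc_of_le hs.1] at hu
        show K₃ * X u * U u = k u * X u
        rw [hkeq u ⟨hu.1, hu.2.trans hsT.2⟩]
        ring
      have hkXs : IntervalIntegrable (fun u => k u * X u) volume 0 s :=
        hkint.intervalIntegrable.mul_continuousOn (by
          rw [Set.uIcc_of_le hs.1]
          exact hXcont.mono (Set.Icc_subset_Icc le_rfl hsT.2))
      have hkWs : IntervalIntegrable (fun u => k u * W u) volume 0 s :=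
        hkint.intervalIntegrable.mul_continuousOn (by
          rw [Set.uIcc_of_le hs.1]
          exact hWcont.mono (Set.Icc_subset_Icc le_rfl hsT.2))
      have hb2 : (∫ u in (0:ℝ)..s, k u * X u) ≤ ∫ u in (0:ℝ)..s, k u * W u := by
        refine intervalIntegral.integral_mono_on hs.1 hkXs hkWs (fun u hu => ?_)
        exact mul_le_mul_of_nonneg_left (hXW u ⟨hu.1, hu.2.trans hsT.2⟩) (hknn u)
      have hb3 : (∫ u in (0:ℝ)..s, K₄ * H u) ≤ K₄ * ∫ u in (0:ℝ)..T, H u := by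
        rw [← intervalIntegral.integral_const_mul]
        refine intervalIntegral.integral_mono_interval le_rfl hs.1 hsT.2 ?_ hHKint
        refine (MeasureTheory.ae_restrict_iff' measurableSet_Ioc).2
          (Filter.Eventually.of_forall fun u hu => ?_)
        exact mul_nonneg hK₄.le (hHnn u ⟨hu.1.le, hu.2⟩)
      have hb4 : μ * (∫ u in (0:ℝ)..s, Y u)
          ≤ ∫ u in (0:ℝ)..s, (ν₀ - K₂ * Real.sqrt (X u)) * Y u := by
        rw [← intervalIntegral.integral_const_mul]
        refine intervalIntegral.integral_mono_on hs.1
          ((hYint.mono_set hsubu).const_mul μ) hYfacs (fun u hu => ?_)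
        have huT : u ∈ Set.Icc (0:ℝ) T := ⟨hu.1, hu.2.trans hsT.2⟩
        have hXur : X u ≤ r := hbd u ⟨hu.1, hu.2.trans hs.2⟩
        have hsq : Real.sqrt (X u) ≤ νb / K₂ := by
          have h1 : Real.sqrt (X u) ≤ Real.sqrt r := Real.sqrt_le_sqrt hXur
          rwa [hrdef, Real.sqrt_sq (le_of_lt (div_pos hνb hK₂))] at h1
        have h2 : K₂ * Real.sqrt (X u) ≤ νb := by
          have := mul_le_mul_of_nonneg_left hsq hK₂.le
          rwa [mul_div_cancel₀ _ (ne_of_gt hK₂)] at this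
        have h3 : μ ≤ ν₀ - K₂ * Real.sqrt (X u) := by rw [hμ]; linarith
        exact mul_le_mul_of_nonneg_right h3 (hYnn u huT)
      have hWs : W s = X s + μ * ∫ u in (0:ℝ)..s, Y u := rfl
      rw [hWs]
      rw [hsplit, hb1] at hftc
      linarith
    -- clamp W to [0, t] and apply the integrable-kernel Gronwall lemma
    set p : ℝ → ℝ := fun u => max 0 (min u t) with hpdef
    have hpc : Continuous p := continuous_const.max (continuous_id.min continuous_const)
    have hpmem : ∀ u, p u ∈ Set.Icc (0:ℝ) T := fun u =>
      ⟨le_max_left _ _, max_le hT.le ((min_le_right u t).trans ht.2)⟩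
    have hpeq : ∀ u ∈ Set.Icc (0:ℝ) t, p u = u := by
      intro u hu
      simp [hpdef, min_eq_left hu.2, max_eq_right hu.1]
    set Wc : ℝ → ℝ := fun u => W (p u) with hWcdef
    have hWcc : Continuous Wc := hWcont.comp_continuous hpc hpmem
    have hWch : ∀ u ∈ Set.Icc (0:ℝ) t, Wc u ≤ A + ∫ v in (0:ℝ)..u, k v * Wc v := by
      intro u hu
      have h1 : Wc u = W u := by rw [hWcdef]; simp only []; rw [hpeq u hu]
      have h2 : (∫ v in (0:ℝ)..u, k v * Wc v) = ∫ v in (0:ℝ)..u, k v * W v := by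
        apply intervalIntegral.integral_congr
        intro v hv
        rw [Set.uIcc_of_le hu.1] at hv
        show k v * Wc v = k v * W v
        have hWcv : Wc v = W v := by rw [hWcdef]; simp only []; rw [hpeq v ⟨hv.1, hv.2.trans hu.2⟩]
        rw [hWcv]
      rw [h1, h2]
      exact hW u hu
    have hg := gronwall_int k Wc hkint hknn hWcc t A hAnn hWch
    intro s hs
    have h1 : Wc s = W s := by rw [hWcdef]; simp only []; rw [hpeq s hs]
    have h2 := hg s hs
    rw [h1] at h2
    have h3 : (∫ v in (0:ℝ)..s, k v) ≤ ∫ v in (0:ℝ)..T, k v := by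
      refine intervalIntegral.integral_mono_interval le_rfl hs.1 (hs.2.trans ht.2)
        (Filter.Eventually.of_forall fun v => hknn v) hkint.intervalIntegrable
    calc W s ≤ A * Real.exp (∫ v in (0:ℝ)..s, k v) := h2
      _ ≤ A * Real.exp (∫ v in (0:ℝ)..T, k v) :=
          mul_le_mul_of_nonneg_left (Real.exp_le_exp.2 h3) hAnn
      _ = E := hkTE
  -- bootstrap / continuous induction
  set B : Set ℝ := {t | t ∈ Set.Icc (0:ℝ) T ∧ ∀ s ∈ Set.Icc (0:ℝ) t, X s ≤ r} with hBdef
  have h0B : (0:ℝ) ∈ B := by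
    refine ⟨⟨le_refl 0, hT.le⟩, fun s hs => ?_⟩
    have hs0 : s = 0 := le_antisymm hs.2 hs.1
    rw [hs0]
    exact ((hX0A.trans hAE).trans hErlt.le)
  have hBbdd : BddAbove B := ⟨T, fun x hx => hx.1.2⟩
  have hBne : B.Nonempty := ⟨0, h0B⟩
  set τ := sSup B with hτdef
  have hτ0 : 0 ≤ τ := le_csSup hBbdd h0B
  have hτT : τ ≤ T := csSup_le hBne (fun x hx => hx.1.2)
  have hτIcc : τ ∈ Set.Icc (0:ℝ) T := ⟨hτ0, hτT⟩
  have hlt : ∀ s, 0 ≤ s → s < τ → X s ≤ E := by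
    intro s hs0 hsτ
    obtain ⟨t', ht'B, hst'⟩ := exists_lt_of_lt_csSup hBne hsτ
    have hW := key t' ht'B.1 ht'B.2 s ⟨hs0, hst'.le⟩
    exact (hXW s ⟨hs0, hst'.le.trans ht'B.1.2⟩).trans hW
  have hXτE : X τ ≤ E := by
    rcases eq_or_lt_of_le hτ0 with h0 | h0
    · rw [← h0]
      exact hX0A.trans hAE
    · have hmem : τ ∈ closure (Set.Ico (0:ℝ) τ) := by
        rw [closure_Ico (ne_of_lt h0)]
        exact ⟨hτ0, le_refl τ⟩
      have hnb : (nhdsWithin τ (Set.Ico (0:ℝ) τ)).NeBot :=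
        mem_closure_iff_nhdsWithin_neBot.1 hmem
      have htd : Filter.Tendsto X (nhdsWithin τ (Set.Ico (0:ℝ) τ)) (nhds (X τ)) :=
        (hXcont τ hτIcc).mono (fun x hx => ⟨hx.1, hx.2.le.trans hτT⟩)
      refine le_of_tendsto htd ?_
      exact Filter.eventually_of_mem self_mem_nhdsWithin (fun s hsm => hlt s hsm.1 hsm.2)
  have hτB : τ ∈ B := by
    refine ⟨hτIcc, fun s hs => ?_⟩
    rcases lt_or_eq_of_le hs.2 with h | h
    · exact hlt s hs.1 h |>.trans hErlt.le
    · rw [h]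
      exact hXτE.trans hErlt.le
  have hτeq : τ = T := by
    by_contra hne
    have hτltT : τ < T := lt_of_le_of_ne hτT hne
    have hXτr : X τ < r := lt_of_le_of_lt hXτE hErlt
    have hev : ∀ᶠ s in nhdsWithin τ (Set.Icc (0:ℝ) T), X s < r :=
      (hXcont τ hτIcc).eventually_lt_const hXτr
    rw [eventually_nhdsWithin_iff, Metric.eventually_nhds_iff] at hev
    obtain ⟨δ, hδ, hball⟩ := hev
    set t' := min (τ + δ / 2) T with ht'def
    have ht'B : t' ∈ B := by
      refine ⟨⟨le_min (by linarith) hT.le, min_le_right _ _⟩, fun s hs => ?_⟩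
      rcases le_or_gt s τ with h | h
      · exact hτB.2 s ⟨hs.1, h⟩
      · have hs1 : s ≤ T := hs.2.trans (min_le_right _ _)
        have hs2 : s - τ ≤ δ / 2 := by
          have := hs.2.trans (min_le_left _ _)
          linarith
        have hd : dist s τ < δ := by
          rw [Real.dist_eq, abs_of_pos (sub_pos.2 h)]
          linarith
        exact (hball hd ⟨hs.1, hs1⟩).le
    have hle : t' ≤ τ := le_csSup hBbdd ht'B
    have hgt : τ < t' := lt_min (by linarith) hτltT
    linarith
  intro t ht
  have hWle := key T ⟨hT.le, le_refl T⟩ (hτeq ▸ hτB.2) t ht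
  exact ⟨hWle, lt_of_le_of_lt ((hXW t ht).trans hWle) hErlt⟩
end

section
/- Let T₀ > 0, ν₀ > 0, K₂ > 0, 0 < μ < ν₀ and σ ∈ (0,1). Let X : [0,T₀] → ℝ be continuous, nonnegative and differentiable on (0,T₀), and let Y, G, H : [0,T₀] → ℝ be nonnegative and Lebesgue integrable. Assume X(0) ≤ ((ν₀ − μ)/K₂)², the differential inequality X'(t) + (ν₀ − K₂·√(X(t)))·Y(t) ≤ X(t)·G(t) + H(t) for every t ∈ (0,T₀), and the condition (((ν₀ − μ)/K₂)² + ∫₀^{T₀} H(t) dt)·exp(∫₀^{T₀} G(t) dt) < ((ν₀ − σμ)/K₂)². Then for every t ∈ [0,T₀], X(t) + σμ·∫₀ᵗ Y(s) ds < ((ν₀ − σμ)/K₂)². -/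
open MeasureTheory

set_option maxHeartbeats 1000000

/-- ODI core of Lemma 1 (caloric lower bound for the existence time):
from `X' + (ν₀ - K₂ √X) Y ≤ X G + H`, `X(0) ≤ ((ν₀-μ)/K₂)²` and the smallness
condition, the bound `X(t) + σμ ∫₀ᵗ Y < ((ν₀-σμ)/K₂)²` holds on `[0,T₀]`. -/
theorem stmt2 (T₀ ν₀ K₂ μ σ : ℝ)
    (hT₀ : 0 < T₀) (hν₀ : 0 < ν₀) (hK₂ : 0 < K₂)
    (hμ0 : 0 < μ) (hμν : μ < ν₀) (hσ : σ ∈ Set.Ioo (0:ℝ) 1)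
    (X X' Y G H : ℝ → ℝ)
    (hXcont : ContinuousOn X (Set.Icc 0 T₀))
    (hXnn : ∀ t ∈ Set.Icc (0:ℝ) T₀, 0 ≤ X t)
    (hXderiv : ∀ t ∈ Set.Ioo (0:ℝ) T₀, HasDerivAt X (X' t) t)
    (hYnn : ∀ t ∈ Set.Icc (0:ℝ) T₀, 0 ≤ Y t)
    (hGnn : ∀ t ∈ Set.Icc (0:ℝ) T₀, 0 ≤ G t)
    (hHnn : ∀ t ∈ Set.Icc (0:ℝ) T₀, 0 ≤ H t)
    (hYint : IntervalIntegrable Y volume 0 T₀)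
    (hGint : IntervalIntegrable G volume 0 T₀)
    (hHint : IntervalIntegrable H volume 0 T₀)
    (hX0 : X 0 ≤ ((ν₀ - μ) / K₂) ^ 2)
    (hODI : ∀ t ∈ Set.Ioo (0:ℝ) T₀,
      X' t + (ν₀ - K₂ * Real.sqrt (X t)) * Y t ≤ X t * G t + H t)
    (hsmall : (((ν₀ - μ) / K₂) ^ 2 + ∫ t in (0:ℝ)..T₀, H t) *
        Real.exp (∫ t in (0:ℝ)..T₀, G t) < ((ν₀ - σ * μ) / K₂) ^ 2) :
    ∀ t ∈ Set.Icc (0:ℝ) T₀,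
      X t + σ * μ * ∫ s in (0:ℝ)..t, Y s < ((ν₀ - σ * μ) / K₂) ^ 2 := by
  obtain ⟨hσ0, hσ1⟩ := hσ
  set B : ℝ := ((ν₀ - σ * μ) / K₂) ^ 2 with hBdef
  set C : ℝ := ((ν₀ - μ) / K₂) ^ 2 with hCdef
  have hσμ : 0 < σ * μ := mul_pos hσ0 hμ0
  have hσμν : σ * μ < ν₀ := by nlinarith
  have hBnn : 0 ≤ B := sq_nonneg _
  have hCnn : 0 ≤ C := sq_nonneg _
  have hsqrtB : Real.sqrt B = (ν₀ - σ * μ) / K₂ :=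
    Real.sqrt_sq (div_nonneg (by linarith) hK₂.le)
  set g : ℝ → ℝ := fun t => ∫ s in (0:ℝ)..t, G s with hgdef
  set h : ℝ → ℝ := fun t => ∫ s in (0:ℝ)..t, H s with hhdef
  set F : ℝ → ℝ := fun t => X t + σ * μ * ∫ s in (0:ℝ)..t, Y s with hFdef
  have huIcc : Set.uIcc (0:ℝ) T₀ = Set.Icc 0 T₀ := Set.uIcc_of_le hT₀.le
  -- restriction of interval integrability
  have hsubII : ∀ {f : ℝ → ℝ}, IntervalIntegrable f volume 0 T₀ →
      ∀ {a b : ℝ}, a ∈ Set.Icc (0:ℝ) T₀ → b ∈ Set.Icc (0:ℝ) T₀ →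
      IntervalIntegrable f volume a b := by
    intro f hf a b ha hb
    exact hf.mono_set (Set.uIcc_subset_uIcc (by rwa [huIcc]) (by rwa [huIcc]))
  -- continuity of primitives
  have hprim : ∀ {f : ℝ → ℝ}, IntervalIntegrable f volume 0 T₀ →
      ContinuousOn (fun t => ∫ s in (0:ℝ)..t, f s) (Set.Icc 0 T₀) := by
    intro f hf
    have := intervalIntegral.continuousOn_primitive_interval'
      (μ := volume) (b₁ := (0:ℝ)) (b₂ := T₀) (a := 0) hf
      (by rw [huIcc]; exact Set.left_mem_Icc.2 hT₀.le)
    rwa [huIcc] at this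
  have hgcont : ContinuousOn g (Set.Icc 0 T₀) := hprim hGint
  have hhcont : ContinuousOn h (Set.Icc 0 T₀) := hprim hHint
  have hFcont : ContinuousOn F (Set.Icc 0 T₀) :=
    hXcont.add (continuousOn_const.mul (hprim hYint))
  -- difference of primitives
  have hdiff : ∀ {f : ℝ → ℝ}, IntervalIntegrable f volume 0 T₀ →
      ∀ {a b : ℝ}, a ∈ Set.Icc (0:ℝ) T₀ → b ∈ Set.Icc (0:ℝ) T₀ →
      (∫ s in (0:ℝ)..b, f s) - (∫ s in (0:ℝ)..a, f s) = ∫ s in a..b, f s := by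
    intro f hf a b ha hb
    exact intervalIntegral.integral_interval_sub_left
      (hsubII hf (Set.left_mem_Icc.2 hT₀.le) hb) (hsubII hf (Set.left_mem_Icc.2 hT₀.le) ha)
  -- nonnegativity of integrals of nonneg functions
  have hintnn : ∀ {f : ℝ → ℝ}, (∀ t ∈ Set.Icc (0:ℝ) T₀, 0 ≤ f t) →
      ∀ {a b : ℝ}, a ∈ Set.Icc (0:ℝ) T₀ → b ∈ Set.Icc (0:ℝ) T₀ → a ≤ b →
      0 ≤ ∫ s in a..b, f s := by
    intro f hfnn a b ha hb hab
    exact intervalIntegral.integral_nonneg hab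
      (fun u hu => hfnn u ⟨ha.1.trans hu.1, hu.2.trans hb.2⟩)
  have hgmono : ∀ {a b : ℝ}, a ∈ Set.Icc (0:ℝ) T₀ → b ∈ Set.Icc (0:ℝ) T₀ → a ≤ b →
      g a ≤ g b := by
    intro a b ha hb hab
    have := hintnn hGnn ha hb hab
    have h2 := hdiff hGint ha hb
    simp only [hgdef] at *
    linarith
  have hhmono : ∀ {a b : ℝ}, a ∈ Set.Icc (0:ℝ) T₀ → b ∈ Set.Icc (0:ℝ) T₀ → a ≤ b →
      h a ≤ h b := by
    intro a b ha hb hab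
    have := hintnn hHnn ha hb hab
    have h2 := hdiff hHint ha hb
    simp only [hhdef] at *
    linarith
  have hg0 : g 0 = 0 := intervalIntegral.integral_same
  have hh0 : h 0 = 0 := intervalIntegral.integral_same
  have hF0 : F 0 = X 0 := by simp [hFdef, intervalIntegral.integral_same]
  have hgnn : ∀ {a : ℝ}, a ∈ Set.Icc (0:ℝ) T₀ → 0 ≤ g a := by
    intro a ha
    have := hgmono (Set.left_mem_Icc.2 hT₀.le) ha ha.1
    simpa [hg0] using this
  have hhnn : ∀ {a : ℝ}, a ∈ Set.Icc (0:ℝ) T₀ → 0 ≤ h a := by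
    intro a ha
    have := hhmono (Set.left_mem_Icc.2 hT₀.le) ha ha.1
    simpa [hh0] using this
  have hXleF : ∀ {u : ℝ}, u ∈ Set.Icc (0:ℝ) T₀ → X u ≤ F u := by
    intro u hu
    have : 0 ≤ ∫ s in (0:ℝ)..u, Y s :=
      hintnn hYnn (Set.left_mem_Icc.2 hT₀.le) hu hu.1
    simp only [hFdef]
    exact le_add_of_nonneg_right (mul_nonneg hσμ.le this)
  have hFnn : ∀ {u : ℝ}, u ∈ Set.Icc (0:ℝ) T₀ → 0 ≤ F u :=
    fun {u} hu => (hXnn u hu).trans (hXleF hu)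
  -- the key differential-to-integral inequality on subintervals
  have key : ∀ a b M : ℝ, a ∈ Set.Icc (0:ℝ) T₀ → b ∈ Set.Icc (0:ℝ) T₀ → a ≤ b →
      (∀ u ∈ Set.Ioo a b, X u < B) → (∀ u ∈ Set.Ioo a b, X u ≤ M) →
      F b ≤ F a + M * (g b - g a) + (h b - h a) := by
    intro a b M ha hb hab hXlt hXM
    have hmem : ∀ u ∈ Set.Ioo a b, u ∈ Set.Icc (0:ℝ) T₀ :=
      fun u hu => ⟨ha.1.trans hu.1.le, hu.2.le.trans hb.2⟩
    have hmemo : ∀ u ∈ Set.Ioo a b, u ∈ Set.Ioo (0:ℝ) T₀ :=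
      fun u hu => ⟨lt_of_le_of_lt ha.1 hu.1, lt_of_lt_of_le hu.2 hb.2⟩
    set φ : ℝ → ℝ := fun u => M * G u + H u - σ * μ * Y u with hφdef
    have hφII : IntervalIntegrable φ volume a b :=
      (((hsubII hGint ha hb).const_mul M).add (hsubII hHint ha hb)).sub
        ((hsubII hYint ha hb).const_mul (σ * μ))
    have hφint : IntegrableOn φ (Set.Icc a b) volume := by
      rwa [intervalIntegrable_iff_integrableOn_Icc_of_le hab] at hφII
    have hder : ∀ u ∈ Set.Ioo a b, HasDerivWithinAt X (X' u) (Set.Ioi u) u :=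
      fun u hu => (hXderiv u (hmemo u hu)).hasDerivWithinAt
    have hXab : X b - X a ≤ ∫ u in a..b, φ u := by
      apply intervalIntegral.sub_le_integral_of_hasDeriv_right_of_le hab
        (hXcont.mono (Set.Icc_subset_Icc ha.1 hb.2)) hder hφint
      intro u hu
      have h1 := hODI u (hmemo u hu)
      have h2 : Real.sqrt (X u) < (ν₀ - σ * μ) / K₂ := by
        rw [← hsqrtB]
        exact Real.sqrt_lt_sqrt (hXnn u (hmem u hu)) (hXlt u hu)
      have h3 : σ * μ ≤ ν₀ - K₂ * Real.sqrt (X u) := by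
        have h2' := (lt_div_iff₀ hK₂).1 h2
        linarith only [h2']
      have h4 : σ * μ * Y u ≤ (ν₀ - K₂ * Real.sqrt (X u)) * Y u :=
        mul_le_mul_of_nonneg_right h3 (hYnn u (hmem u hu))
      have h5 : X u * G u ≤ M * G u :=
        mul_le_mul_of_nonneg_right (hXM u hu) (hGnn u (hmem u hu))
      simp only [hφdef]
      linarith only [h1, h4, h5]
    have hsplit : ∫ u in a..b, φ u
        = M * (g b - g a) + (h b - h a) - σ * μ * ∫ u in a..b, Y u := by
      rw [hdiff hGint ha hb, hdiff hHint ha hb]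
      simp only [hφdef]
      rw [intervalIntegral.integral_sub (((hsubII hGint ha hb).const_mul M).add
          (hsubII hHint ha hb)) ((hsubII hYint ha hb).const_mul (σ * μ)),
        intervalIntegral.integral_add ((hsubII hGint ha hb).const_mul M) (hsubII hHint ha hb),
        intervalIntegral.integral_const_mul, intervalIntegral.integral_const_mul]
    have hYsplit : (∫ s in (0:ℝ)..b, Y s) - (∫ s in (0:ℝ)..a, Y s) = ∫ u in a..b, Y u :=
      hdiff hYint ha hb
    simp only [hFdef]
    rw [hsplit] at hXab
    have h6 := congrArg (fun z : ℝ => σ * μ * z) hYsplit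
    simp only at h6
    linarith only [hXab, h6]
  -- contradiction setup
  by_contra hcon
  push_neg at hcon
  obtain ⟨t₁, ht₁, hFt₁⟩ := hcon
  have hSne : (Set.Icc 0 T₀ ∩ F ⁻¹' Set.Ici B).Nonempty := ⟨t₁, ht₁, hFt₁⟩
  have hSclosed : IsClosed (Set.Icc 0 T₀ ∩ F ⁻¹' Set.Ici B) :=
    hFcont.preimage_isClosed_of_isClosed isClosed_Icc isClosed_Ici
  have hSbdd : BddBelow (Set.Icc 0 T₀ ∩ F ⁻¹' Set.Ici B) :=
    ⟨0, fun x hx => hx.1.1⟩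
  set τ := sInf (Set.Icc 0 T₀ ∩ F ⁻¹' Set.Ici B) with hτdef
  have hτS : τ ∈ Set.Icc 0 T₀ ∩ F ⁻¹' Set.Ici B := hSclosed.csInf_mem hSne hSbdd
  have hτmem : τ ∈ Set.Icc (0:ℝ) T₀ := hτS.1
  have hFτ : B ≤ F τ := hτS.2
  -- D < B and C < B
  have hD : (C + h T₀) * Real.exp (g T₀) < B := hsmall
  have hgT₀nn : 0 ≤ g T₀ := hgnn (Set.right_mem_Icc.2 hT₀.le)
  have hhT₀nn : 0 ≤ h T₀ := hhnn (Set.right_mem_Icc.2 hT₀.le)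
  have hexpT₀ : 1 ≤ Real.exp (g T₀) := Real.one_le_exp hgT₀nn
  have hCB : C < B := by
    have h1 : C + h T₀ ≤ (C + h T₀) * Real.exp (g T₀) :=
      le_mul_of_one_le_right (by linarith) hexpT₀
    linarith
  have hF0B : F 0 < B := by rw [hF0]; exact lt_of_le_of_lt hX0 hCB
  have hτpos : 0 < τ := by
    rcases hτmem.1.lt_or_eq with hlt | heq
    · exact hlt
    · exact absurd hFτ (by rw [← heq]; exact not_le.2 hF0B)
  have hlt : ∀ u, 0 ≤ u → u < τ → F u < B := by
    intro u h0 hu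
    by_contra hge
    push_neg at hge
    exact absurd (csInf_le hSbdd ⟨⟨h0, hu.le.trans hτmem.2⟩, hge⟩) (not_le.2 hu)
  have hXltB : ∀ u, 0 ≤ u → u < τ → X u < B := fun u h0 hu =>
    lt_of_le_of_lt (hXleF ⟨h0, hu.le.trans hτmem.2⟩) (hlt u h0 hu)
  clear hτdef
  clear_value τ
  -- main estimate: for every ε > 0
  have main : ∀ ε : ℝ, 0 < ε →
      F τ ≤ (X 0 + h τ + B * ε * g τ) * Real.exp (g τ) := by
    intro ε hε
    have hUC : UniformContinuousOn g (Set.Icc 0 T₀) :=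
      isCompact_Icc.uniformContinuousOn_of_continuous hgcont
    obtain ⟨δ, hδ0, hδ⟩ := Metric.uniformContinuousOn_iff.1 hUC ε hε
    obtain ⟨n, hn⟩ := exists_nat_gt (τ / δ)
    have hn0 : 0 < (n : ℝ) := lt_of_le_of_lt (div_nonneg hτpos.le hδ0.le) hn
    have hnne : (n : ℝ) ≠ 0 := ne_of_gt hn0
    have hstep : τ / n < δ := by
      rw [div_lt_iff₀ hn0]
      calc τ = (τ / δ) * δ := by field_simp
        _ < n * δ := by exact mul_lt_mul_of_pos_right hn hδ0
        _ = δ * n := mul_comm _ _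
    -- points of the partition
    have hptτ : ∀ i : ℕ, i ≤ n → (i : ℝ) * τ / n ≤ τ := by
      intro i hi
      have hin : (i : ℝ) ≤ n := Nat.cast_le.2 hi
      have h1 : (i : ℝ) * τ ≤ (n : ℝ) * τ := mul_le_mul_of_nonneg_right hin hτpos.le
      rw [div_le_iff₀ hn0]
      linarith
    have hpt : ∀ i : ℕ, i ≤ n → (i : ℝ) * τ / n ∈ Set.Icc (0:ℝ) T₀ := by
      intro i hi
      exact ⟨div_nonneg (mul_nonneg (Nat.cast_nonneg i) hτpos.le) hn0.le,
        (hptτ i hi).trans hτmem.2⟩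
    have hind : ∀ i : ℕ, i ≤ n →
        F ((i : ℝ) * τ / n) ≤
          (X 0 + h ((i : ℝ) * τ / n) + B * ε * g ((i : ℝ) * τ / n)) *
            Real.exp (g ((i : ℝ) * τ / n)) := by
      intro i
      induction i with
      | zero =>
        intro _
        simp [hg0, hh0, hF0]
      | succ i ih =>
        intro hi1
        have hi : i ≤ n := Nat.le_of_succ_le hi1
        have IH := ih hi
        set a := (i : ℝ) * τ / n with hadef
        set b := ((i + 1 : ℕ) : ℝ) * τ / n with hbdef
        have hamem := hpt i hi
        have hbmem := hpt (i + 1) hi1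
        have haτ := hptτ i hi
        have hbτ := hptτ (i + 1) hi1
        have hab : a ≤ b := by
          simp only [hadef, hbdef]
          rw [div_le_div_iff_of_pos_right hn0]
          have : (i : ℝ) ≤ ((i + 1 : ℕ) : ℝ) := by push_cast; linarith
          exact mul_le_mul_of_nonneg_right this hτpos.le
        have hba : b - a = τ / n := by
          simp only [hadef, hbdef]
          push_cast
          field_simp
          ring
        set q := g a with hqdef
        set γ := g b - g a with hγdef
        set η := h b - h a with hηdef
        have hqnn : 0 ≤ q := hgnn hamem
        have hγnn : 0 ≤ γ := by
          have := hgmono hamem hbmem hab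
          simp only [hγdef]; linarith
        have hηnn : 0 ≤ η := by
          have := hhmono hamem hbmem hab
          simp only [hηdef]; linarith
        have hγε : γ ≤ ε := by
          have hd : dist b a < δ := by
            rw [Real.dist_eq, hba, abs_of_nonneg (by positivity)]
            exact hstep
          have := hδ b hbmem a hamem hd
          rw [Real.dist_eq] at this
          have := le_abs_self (g b - g a)
          simp only [hγdef]
          linarith [abs_sub_comm (g b) (g a) ▸ (le_abs_self (g b - g a))]
        -- bound X on Ioo a b
        have hXltab : ∀ u ∈ Set.Ioo a b, X u < B := by
          intro u hu
          exact hXltB u (hamem.1.trans hu.1.le) (lt_of_lt_of_le hu.2 hbτ)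
        have hM : ∀ u ∈ Set.Ioo a b, X u ≤ F a + B * γ + η := by
          intro u hu
          have humem : u ∈ Set.Icc (0:ℝ) T₀ :=
            ⟨hamem.1.trans hu.1.le, hu.2.le.trans hbmem.2⟩
          have h1 : F u ≤ F a + B * (g u - g a) + (h u - h a) := by
            apply key a u B hamem humem hu.1.le
            · intro w hw
              exact hXltB w (hamem.1.trans hw.1.le)
                (lt_of_lt_of_le hw.2 (hu.2.le.trans hbτ))
            · intro w hw
              exact (hXltB w (hamem.1.trans hw.1.le)
                (lt_of_lt_of_le hw.2 (hu.2.le.trans hbτ))).le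
          have h2 : g u - g a ≤ γ := by
            have := hgmono humem hbmem hu.2.le
            simp only [hγdef]; linarith
          have h3 : h u - h a ≤ η := by
            have := hhmono humem hbmem hu.2.le
            simp only [hηdef]; linarith
          have h4 := hXleF humem
          have h5 : B * (g u - g a) ≤ B * γ := mul_le_mul_of_nonneg_left h2 hBnn
          linarith only [h1, h3, h4, h5]
        have hkey := key a b (F a + B * γ + η) hamem hbmem hab hXltab hM
        -- now the arithmetic
        have hFa : F a ≤ (X 0 + h a + B * ε * q) * Real.exp q := IH
        have hFann : 0 ≤ F a := hFnn hamem
        have hX0nn : 0 ≤ X 0 := hXnn 0 (Set.left_mem_Icc.2 hT₀.le)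
        have hhann : 0 ≤ h a := hhnn hamem
        have hexpq : 1 ≤ Real.exp q := Real.one_le_exp hqnn
        have hexpγ : 1 ≤ Real.exp γ := Real.one_le_exp hγnn
        have hγexp : 1 + γ ≤ Real.exp γ := by
          have := Real.add_one_le_exp γ
          linarith
        have hgb : g b = q + γ := by simp only [hqdef, hγdef]; ring
        have hhb : h b = h a + η := by simp only [hηdef]; ring
        have hexpadd : Real.exp (q + γ) = Real.exp q * Real.exp γ := Real.exp_add q γ
        rw [hgb, hhb, hexpadd]
        rw [← hγdef, ← hηdef] at hkey
        have e1 : F b ≤ F a * (1 + γ) + B * γ * γ + η * (1 + γ) := by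
          have hr : F a + (F a + B * γ + η) * γ + η
              = F a * (1 + γ) + B * γ * γ + η * (1 + γ) := by ring
          linarith only [hkey, hr]
        have e2 : F a * (1 + γ) ≤ (X 0 + h a + B * ε * q) * Real.exp q * (1 + γ) := by
          have h1γ : (0:ℝ) ≤ 1 + γ := by linarith
          exact mul_le_mul_of_nonneg_right hFa h1γ
        have e3 : (X 0 + h a + B * ε * q) * Real.exp q * (1 + γ) ≤
            (X 0 + h a + B * ε * q) * Real.exp q * Real.exp γ := by
          have hc : 0 ≤ (X 0 + h a + B * ε * q) * Real.exp q := by positivity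
          exact mul_le_mul_of_nonneg_left hγexp hc
        have hexpqγ1 : (1:ℝ) ≤ Real.exp q * Real.exp γ := by
          have := mul_le_mul hexpq hexpγ zero_le_one (zero_le_one.trans hexpq)
          linarith
        have hexpγqγ : (1:ℝ) + γ ≤ Real.exp q * Real.exp γ := by
          have h1 : Real.exp γ ≤ Real.exp q * Real.exp γ :=
            le_mul_of_one_le_left (Real.exp_pos γ).le hexpq
          linarith
        have e4 : B * γ * γ ≤ B * ε * γ * (Real.exp q * Real.exp γ) := by
          have f1 : B * γ * γ ≤ B * ε * γ :=
            mul_le_mul_of_nonneg_right (mul_le_mul_of_nonneg_left hγε hBnn) hγnn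
          have f2 : B * ε * γ ≤ B * ε * γ * (Real.exp q * Real.exp γ) :=
            le_mul_of_one_le_right (by positivity) hexpqγ1
          linarith
        have e5 : η * (1 + γ) ≤ η * (Real.exp q * Real.exp γ) :=
          mul_le_mul_of_nonneg_left hexpγqγ hηnn
        have efin : (X 0 + h a + B * ε * q) * Real.exp q * Real.exp γ
              + B * ε * γ * (Real.exp q * Real.exp γ)
              + η * (Real.exp q * Real.exp γ)
            = (X 0 + (h a + η) + B * ε * (q + γ)) * (Real.exp q * Real.exp γ) := by
          ring
        linarith only [e1, e2, e3, e4, e5, efin]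
    have hfin := hind n le_rfl
    have hnτ : (n : ℝ) * τ / n = τ := by field_simp
    rwa [hnτ] at hfin
  -- pass to the limit ε → 0 to contradict hsmall
  have hgτT : g τ ≤ g T₀ := hgmono hτmem (Set.right_mem_Icc.2 hT₀.le) hτmem.2
  have hhτT : h τ ≤ h T₀ := hhmono hτmem (Set.right_mem_Icc.2 hT₀.le) hτmem.2
  have hgτnn : 0 ≤ g τ := hgnn hτmem
  have hhτnn : 0 ≤ h τ := hhnn hτmem
  have hexpττ : Real.exp (g τ) ≤ Real.exp (g T₀) := Real.exp_le_exp.2 hgτT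
  have hexppos : 0 < Real.exp (g τ) := Real.exp_pos _
  have hX0nn : 0 ≤ X 0 := hXnn 0 (Set.left_mem_Icc.2 hT₀.le)
  have hBD : B ≤ (C + h T₀) * Real.exp (g T₀) := by
    apply le_of_forall_pos_le_add
    intro ε hε
    set c := B * g T₀ * Real.exp (g T₀) with hcdef
    have hcnn : 0 ≤ c := by positivity
    set ε' := ε / (c + 1) with hε'def
    have hε'0 : 0 < ε' := by positivity
    have h1 := main ε' hε'0
    have h2 : F τ ≤ (C + h T₀ + B * ε' * g T₀) * Real.exp (g T₀) := by
      have hcoef : X 0 + h τ + B * ε' * g τ ≤ C + h T₀ + B * ε' * g T₀ := by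
        have : B * ε' * g τ ≤ B * ε' * g T₀ :=
          mul_le_mul_of_nonneg_left hgτT (by positivity)
        linarith
      have hcoefnn : 0 ≤ X 0 + h τ + B * ε' * g τ := by positivity
      calc F τ ≤ (X 0 + h τ + B * ε' * g τ) * Real.exp (g τ) := h1
        _ ≤ (C + h T₀ + B * ε' * g T₀) * Real.exp (g τ) :=
            mul_le_mul_of_nonneg_right hcoef hexppos.le
        _ ≤ (C + h T₀ + B * ε' * g T₀) * Real.exp (g T₀) := by
            apply mul_le_mul_of_nonneg_left hexpττ
            positivity
    have h3 : (C + h T₀ + B * ε' * g T₀) * Real.exp (g T₀)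
        = (C + h T₀) * Real.exp (g T₀) + ε' * c := by
      simp only [hcdef]; ring
    have h4 : ε' * c ≤ ε := by
      rw [hε'def, div_mul_eq_mul_div, div_le_iff₀ (by positivity)]
      nlinarith
    linarith
  linarith
end
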